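/- arXiv:2402.06732 — 2 statements merged into one kernel-verified Lean document; each statement's English description precedes it below -/
import Mathlib

section
/- Let a, b, k be nonnegative integers with k ≤ min(a,b). Then the poset (A_k([a] × [b]), ≤_k) is isomorphic to the product poset C(a,k) × C(b,k). Explicitly, the map sending the antichain {(x_1,y_1),…,(x_k,y_k)} with x_1 < ⋯ < x_k and y_1 > ⋯ > y_k to the pair ((x_1,…,x_k), (y_k,…,y_1)) is a poset isomorphism. -/
/-- The product poset `[a] × [b]` of the chains `{1,…,a}` and `{1,…,b}`,
with the componentwise order. -/
abbrev Box (a b : ℕ) : Type :=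
  {p : ℕ × ℕ // (1 ≤ p.1 ∧ p.1 ≤ a) ∧ (1 ≤ p.2 ∧ p.2 ≤ b)}

/-- The poset `C(n,k)`: `k`-element subsets of `{1,…,n}` written as increasing
sequences, ordered componentwise. -/
abbrev GaleC (n k : ℕ) : Type :=
  {x : Fin k → ℕ // StrictMono x ∧ ∀ i, 1 ≤ x i ∧ x i ≤ n}


/-- `A_k(P)`: the set of antichains of `P` of cardinality exactly `k`. -/
def AkSet (P : Type*) [PartialOrder P] (k : ℕ) : Type _ :=
  {A : Finset P // IsAntichain (· ≤ ·) (A : Set P) ∧ A.card = k}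

/-- The underlying finite set of elements of an antichain in `A_k(P)`. -/
def AkSet.carrier {P : Type*} [PartialOrder P] {k : ℕ} (A : AkSet P k) : Finset P :=
  Subtype.val A

/-- `A ≺_k B` iff `A \ B = {a}` and `B \ A = {b}` are singletons with `a <_P b`. -/
def PrecK {P : Type*} [PartialOrder P] {k : ℕ} (A B : AkSet P k) : Prop :=
  ∃ a b : P,
    ((A.carrier : Set P) \ (B.carrier : Set P)) = {a} ∧
    ((B.carrier : Set P) \ (A.carrier : Set P)) = {b} ∧ a < b

/-- `≤_k`: the reflexive transitive closure of `≺_k` on `A_k(P)`. -/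
def LeK {P : Type*} [PartialOrder P] {k : ℕ} : AkSet P k → AkSet P k → Prop :=
  Relation.ReflTransGen PrecK

/-- `A_k(P)` is equipped with the order `≤_k`. -/
instance {P : Type*} [PartialOrder P] {k : ℕ} : LE (AkSet P k) := ⟨LeK⟩


/-!
Listed by increasing first coordinate, a `k`-antichain of `[a] × [b]` has strictly decreasing
second coordinates, so it is the staircase `(x_i, y_{k+1-i})` built from its two coordinate sets;
this is the bijection. A move `A ≺_k B` replaces one point by a larger one, and comparing counting
functions shows that neither sorted coordinate sequence can go down. Conversely, if the coordinate
sequences of `A` are dominated by those of `B`, raising one coordinate of `A` by one (the last one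
that lags behind) is a single move `≺_k` that stays below `B`; since the product of Gale orders is
finite, iterating such moves reaches `B`.
-/

open Function Finset

section Order

variable {α : Type*} [PartialOrder α] [WellFoundedGT α] {r : α → α → Prop}

theorem reflTransGen_of_le_of_exists_step
    (step : ∀ x y : α, x < y → ∃ z, r x z ∧ x < z ∧ z ≤ y) {x y : α} (hxy : x ≤ y) :
    Relation.ReflTransGen r x y := by
  induction x using WellFoundedGT.induction with
  | _ x ih =>
    rcases hxy.eq_or_lt with rfl | hlt
    · exact .refl
    obtain ⟨z, hxz, hxz', hzy⟩ := step x y hlt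
    exact .head hxz (ih z hxz' hzy)

end Order

theorem le_of_card_filter_le {α : Type*} [LinearOrder α] {k : ℕ} {u v : Fin k → α}
    (hu : StrictMono u) (hv : Monotone v)
    (h : ∀ t, #{j | v j ≤ t} ≤ #{j | u j ≤ t}) : u ≤ v := by
  intro i
  by_contra! hlt
  have hv_le : Iic i ⊆ ({j | v j ≤ v i} : Finset (Fin k)) := fun j hj => by
    simpa using hv (mem_Iic.mp hj)
  have hu_le : ({j | u j ≤ v i} : Finset (Fin k)) ⊆ Iio i := fun j hj => by
    simp only [mem_filter, mem_univ, true_and] at hj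
    exact mem_Iio.mpr (lt_of_not_ge fun hij => (hlt.trans_le (hu.monotone hij)).not_ge hj)
  have := h (v i)
  have := card_le_card hv_le
  have := card_le_card hu_le
  simp only [Fin.card_Iic, Fin.card_Iio] at *
  omega

theorem card_filter_le_of_sdiff_eq_singleton {P : Type*} [DecidableEq P] {s t : Finset P}
    {p q : P} (hst : s \ t = {p}) (hts : t \ s = {q}) {Q : P → Prop} [DecidablePred Q]
    (hQ : Q q → Q p) : #(t.filter Q) ≤ #(s.filter Q) := by
  have split : ∀ {s t : Finset P} {p : P}, s \ t = {p} →
      #(s.filter Q) = #((s ∩ t).filter Q) + if Q p then 1 else 0 := by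
    intro s t p h
    rw [← card_sdiff_add_card_inter (s.filter Q) t, filter_inter, add_comm,
      show s.filter Q \ t = ({p} : Finset P).filter Q by rw [← h]; ext; simp; tauto,
      card_filter, card_filter, sum_singleton]
  rw [split hts, split hst, inter_comm]
  split_ifs <;> simp_all

theorem card_filter_comp_eq {ι P : Type*} [Fintype ι] [DecidableEq P] {u : ι → P}
    (hu : Injective u) {s : Finset P} (hs : Set.range u = s) (Q : P → Prop) [DecidablePred Q] :
    #{j | Q (u j)} = #(s.filter Q) := by
  have himage : univ.image u = s := coe_inj.mp (by rw [coe_image, coe_univ, Set.image_univ, hs])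
  rw [← himage, filter_image, card_image_of_injective _ hu]

theorem PrecK.comp_le {P : Type*} [PartialOrder P] {k : ℕ} {A B : AkSet P k} (h : PrecK A B)
    {α : Type*} [LinearOrder α] {c : P → α} (hc : Monotone c) {u v : Fin k → P}
    (hu : StrictMono (c ∘ u)) (hv : StrictMono (c ∘ v))
    (hA : Set.range u = A.carrier) (hB : Set.range v = B.carrier) : c ∘ u ≤ c ∘ v := by
  classical
  obtain ⟨p, q, hAB, hBA, hpq⟩ := h
  refine le_of_card_filter_le hu hv.monotone fun t => ?_
  simp only [comp_apply]
  rw [card_filter_comp_eq hu.injective.of_comp hA (c · ≤ t),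
    card_filter_comp_eq hv.injective.of_comp hB (c · ≤ t)]
  exact card_filter_le_of_sdiff_eq_singleton (by exact_mod_cast hAB) (by exact_mod_cast hBA)
    fun hq => (hc hpq.le).trans hq

theorem range_sdiff_range_eq_singleton {ι P : Type*} {u v : ι → P} (hu : Injective u) {i : ι}
    (heq : ∀ j ≠ i, u j = v j) (hne : u i ≠ v i) : Set.range u \ Set.range v = {u i} := by
  ext r
  simp only [Set.mem_sdiff, Set.mem_range, Set.mem_singleton_iff]
  constructor
  · rintro ⟨⟨j, rfl⟩, hv⟩
    by_contra hji
    exact hv ⟨j, (heq j fun h => hji (h ▸ rfl)).symm⟩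
  · rintro rfl
    refine ⟨⟨i, rfl⟩, fun ⟨j, hj⟩ => ?_⟩
    by_cases hji : j = i
    · exact hne (hji ▸ hj).symm
    · exact hji (hu ((heq j hji).trans hj))

theorem precK_of_eqOn {P : Type*} [PartialOrder P] {k : ℕ} {A B : AkSet P k} {ι : Type*}
    {u v : ι → P} (hu : Injective u) (hv : Injective v) (i : ι) (heq : ∀ j ≠ i, u j = v j)
    (hlt : u i < v i) (hA : Set.range u = A.carrier) (hB : Set.range v = B.carrier) :
    PrecK A B := by
  refine ⟨u i, v i, ?_, ?_, hlt⟩ <;> rw [← hA, ← hB]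
  · exact range_sdiff_range_eq_singleton hu heq hlt.ne
  · exact range_sdiff_range_eq_singleton hv (fun j hj => (heq j hj).symm) hlt.ne'

namespace GaleC

variable {n k : ℕ}

instance : Finite (GaleC n k) :=
  Finite.of_injective (fun X i => (⟨X.1 i, Nat.lt_succ_of_le (X.2.2 i).2⟩ : Fin (n + 1)))
    fun _ _ h => Subtype.ext <| funext fun i => congrArg Fin.val (congrFun h i)

/-- Raise by one the last coordinate where `X` lags behind `Y`: this keeps `X` increasing because
all later coordinates of `X` already agree with those of `Y`. -/
theorem exists_bump {X Y : GaleC n k} (h : X < Y) :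
    ∃ i, ∃ X' : GaleC n k,
      X < X' ∧ X' ≤ Y ∧ X.1 i < X'.1 i ∧ ∀ j ≠ i, X'.1 j = X.1 j := by
  classical
  have hne : ({j | X.1 j < Y.1 j} : Finset (Fin k)).Nonempty := by
    by_contra! hempty
    refine h.ne (Subtype.ext (funext fun j => le_antisymm (h.le j) ?_))
    simpa using Finset.eq_empty_iff_forall_notMem.mp hempty j
  obtain ⟨i, hi, hmax⟩ := exists_max_image _ id hne
  simp only [mem_filter, mem_univ, true_and, id] at hi hmax
  have heq : ∀ j, i < j → X.1 j = Y.1 j := fun j hij =>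
    (h.le j).eq_of_not_lt fun hj => (hmax j hj).not_gt hij
  have hmono : StrictMono (update X.1 i (X.1 i + 1)) := by
    intro j l hjl
    by_cases hj : j = i
    · rw [hj] at hjl ⊢
      simp only [update_self, update_of_ne hjl.ne']
      calc X.1 i + 1 ≤ Y.1 i := hi
        _ < Y.1 l := Y.2.1 hjl
        _ = X.1 l := (heq l hjl).symm
    by_cases hl : l = i
    · rw [hl] at hjl ⊢
      simp only [update_self, update_of_ne hj]
      exact (X.2.1 hjl).trans (lt_add_one _)
    simp only [update_of_ne hj, update_of_ne hl]
    exact X.2.1 hjl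
  have hle : ∀ j, update X.1 i (X.1 i + 1) j ≤ Y.1 j := fun j => by
    rcases eq_or_ne j i with rfl | hj
    · simpa using hi
    · simpa [update_of_ne hj] using h.le j
  have hge : ∀ j, X.1 j ≤ update X.1 i (X.1 i + 1) j := fun j => by
    rcases eq_or_ne j i with rfl | hj
    · simp
    · simp [update_of_ne hj]
  let X' : GaleC n k :=
    ⟨_, hmono, fun j => ⟨(X.2.2 j).1.trans (hge j), (hle j).trans (Y.2.2 j).2⟩⟩
  have hlt_i : X.1 i < X'.1 i := by simp [X']
  exact ⟨i, X', lt_of_le_of_ne hge fun h' => hlt_i.ne (by rw [h']), hle, hlt_i,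
    fun j hj => update_of_ne hj _ _⟩

end GaleC

theorem AkSet.ext {P : Type*} [PartialOrder P] {k : ℕ} {A B : AkSet P k}
    (h : A.carrier = B.carrier) : A = B :=
  Subtype.ext h

namespace Box

variable {a b k : ℕ}

theorem monotone_fst : Monotone fun p : Box a b => p.1.1 := fun _ _ h => h.1

theorem monotone_snd : Monotone fun p : Box a b => p.1.2 := fun _ _ h => h.2

theorem snd_lt_of_fst_le {S : Set (Box a b)} (hS : IsAntichain (· ≤ ·) S) {p q : Box a b}
    (hp : p ∈ S) (hq : q ∈ S) (hpq : p ≠ q) (h : p.1.1 ≤ q.1.1) : q.1.2 < p.1.2 :=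
  lt_of_not_ge fun h' => hS hp hq hpq ⟨h, h'⟩

theorem injOn_fst {S : Set (Box a b)} (hS : IsAntichain (· ≤ ·) S) :
    Set.InjOn (fun p : Box a b => p.1.1) S := fun p hp q hq h => by
  by_contra hpq
  exact (snd_lt_of_fst_le hS hp hq hpq h.le).not_gt (snd_lt_of_fst_le hS hq hp (Ne.symm hpq) h.ge)

theorem injective_of_strictMono_fst {f : Fin k → Box a b} (hx : StrictMono fun i => (f i).1.1) :
    Injective f := fun _ _ h => hx.injective (congrArg (fun p : Box a b => p.1.1) h)

theorem isAntichain_range {f : Fin k → Box a b} (hx : StrictMono fun i => (f i).1.1)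
    (hy : StrictAnti fun i => (f i).1.2) : IsAntichain (· ≤ ·) (Set.range f) := by
  rintro _ ⟨i, rfl⟩ _ ⟨j, rfl⟩ hij hle
  rcases lt_or_gt_of_ne (ne_of_apply_ne f hij) with h | h
  · exact (hy h).not_ge hle.2
  · exact (hx h).not_ge hle.1

theorem strictAnti_snd {f : Fin k → Box a b} (hf : IsAntichain (· ≤ ·) (Set.range f))
    (hx : StrictMono fun i => (f i).1.1) : StrictAnti fun i => (f i).1.2 := fun i j hij =>
  snd_lt_of_fst_le hf ⟨i, rfl⟩ ⟨j, rfl⟩ ((injective_of_strictMono_fst hx).ne hij.ne)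
    (hx hij).le

theorem exists_enum (A : AkSet (Box a b) k) :
    ∃ f : Fin k → Box a b, StrictMono (fun i => (f i).1.1) ∧ Set.range f = A.carrier := by
  classical
  have hcard : #(A.carrier.image fun p => p.1.1) = k :=
    (card_image_of_injOn (injOn_fst A.2.1)).trans A.2.2
  have hm (i : Fin k) : ∃ p ∈ A.carrier, p.1.1 = orderEmbOfFin _ hcard i :=
    mem_image.mp (orderEmbOfFin_mem _ hcard i)
  choose f hfA hfm using hm
  have hx : StrictMono fun i => (f i).1.1 := by
    simpa only [hfm] using (orderEmbOfFin _ hcard).strictMono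
  have himage : univ.image f = A.carrier :=
    eq_of_subset_of_card_le (by simpa [subset_iff] using hfA) (by
      rw [card_image_of_injective _ (injective_of_strictMono_fst hx), card_univ,
        Fintype.card_fin]
      exact A.2.2.le)
  exact ⟨f, hx, by rw [← himage, coe_image, coe_univ, Set.image_univ]⟩

theorem eq_of_range_eq {f g : Fin k → Box a b} (hS : IsAntichain (· ≤ ·) (Set.range f))
    (hf : StrictMono fun i => (f i).1.1) (hg : StrictMono fun i => (g i).1.1)
    (h : Set.range f = Set.range g) : f = g := by
  have hx : (fun i => (f i).1.1) = fun i => (g i).1.1 := by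
    refine (hf.range_inj hg).mp ?_
    change Set.range ((fun p : Box a b => p.1.1) ∘ f) =
      Set.range ((fun p : Box a b => p.1.1) ∘ g)
    rw [Set.range_comp, Set.range_comp, h]
  funext i
  exact injOn_fst hS ⟨i, rfl⟩ (h ▸ ⟨i, rfl⟩) (congrFun hx i)

noncomputable def enum (A : AkSet (Box a b) k) : Fin k → Box a b :=
  (exists_enum A).choose

theorem strictMono_enum_fst (A : AkSet (Box a b) k) : StrictMono fun i => (enum A i).1.1 :=
  (exists_enum A).choose_spec.1

theorem range_enum (A : AkSet (Box a b) k) : Set.range (enum A) = A.carrier :=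
  (exists_enum A).choose_spec.2

theorem strictAnti_enum_snd (A : AkSet (Box a b) k) : StrictAnti fun i => (enum A i).1.2 :=
  strictAnti_snd (range_enum A ▸ A.2.1) (strictMono_enum_fst A)

theorem eq_enum {A : AkSet (Box a b) k} {f : Fin k → Box a b}
    (hf : StrictMono fun i => (f i).1.1) (hA : Set.range f = A.carrier) : f = enum A :=
  eq_of_range_eq (hA ▸ A.2.1) hf (strictMono_enum_fst A) (hA.trans (range_enum A).symm)

def points (P : GaleC a k × GaleC b k) (i : Fin k) : Box a b :=
  ⟨(P.1.1 i, P.2.1 i.rev), P.1.2.2 i, P.2.2.2 i.rev⟩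

theorem strictMono_points_fst (P : GaleC a k × GaleC b k) :
    StrictMono fun i => (points P i).1.1 :=
  P.1.2.1

theorem injective_points (P : GaleC a k × GaleC b k) : Injective (points P) :=
  injective_of_strictMono_fst (strictMono_points_fst P)

theorem isAntichain_range_points (P : GaleC a k × GaleC b k) :
    IsAntichain (· ≤ ·) (Set.range (points P)) :=
  isAntichain_range (strictMono_points_fst P) (P.2.2.1.comp_strictAnti Fin.rev_strictAnti)

def ofGale (P : GaleC a k × GaleC b k) : AkSet (Box a b) k :=
  ⟨univ.image (points P), by simpa using isAntichain_range_points P,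
    by rw [card_image_of_injective _ (injective_points P), card_univ, Fintype.card_fin]⟩

theorem range_points (P : GaleC a k × GaleC b k) :
    Set.range (points P) = (ofGale P).carrier := by
  simp [ofGale, AkSet.carrier]

theorem enum_ofGale (P : GaleC a k × GaleC b k) : enum (ofGale P) = points P :=
  (eq_enum (strictMono_points_fst P) (range_points P)).symm

noncomputable def toGale (A : AkSet (Box a b) k) : GaleC a k × GaleC b k :=
  (⟨fun i => (enum A i).1.1, strictMono_enum_fst A, fun i => (enum A i).2.1⟩,
    ⟨fun i => (enum A i.rev).1.2, (strictAnti_enum_snd A).comp Fin.rev_strictAnti,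
      fun i => (enum A i.rev).2.2⟩)

theorem points_toGale (A : AkSet (Box a b) k) : points (toGale A) = enum A :=
  funext fun i => Subtype.ext (Prod.ext rfl (by simp [toGale, points]))

theorem ofGale_toGale (A : AkSet (Box a b) k) : ofGale (toGale A) = A :=
  AkSet.ext <| coe_injective <| by rw [← range_points, points_toGale, range_enum]

theorem toGale_ofGale (P : GaleC a k × GaleC b k) : toGale (ofGale P) = P := by
  ext i <;> simp [toGale, enum_ofGale, points]

noncomputable def galeEquiv : AkSet (Box a b) k ≃ GaleC a k × GaleC b k where
  toFun := toGale
  invFun := ofGale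
  left_inv := ofGale_toGale
  right_inv := toGale_ofGale

theorem toGale_le_of_precK {A B : AkSet (Box a b) k} (h : PrecK A B) : toGale A ≤ toGale B := by
  have range_rev (A : AkSet (Box a b) k) : Set.range (enum A ∘ Fin.rev) = A.carrier :=
    (Fin.rev_surjective.range_comp _).trans (range_enum A)
  exact ⟨h.comp_le monotone_fst (strictMono_enum_fst A) (strictMono_enum_fst B)
      (range_enum A) (range_enum B),
    h.comp_le monotone_snd ((strictAnti_enum_snd A).comp Fin.rev_strictAnti)
      ((strictAnti_enum_snd B).comp Fin.rev_strictAnti) (range_rev A) (range_rev B)⟩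

theorem toGale_mono {A B : AkSet (Box a b) k} (h : A ≤ B) : toGale A ≤ toGale B := by
  induction (h : Relation.ReflTransGen PrecK A B) with
  | refl => exact le_rfl
  | tail _ hBC ih => exact ih.trans (toGale_le_of_precK hBC)

theorem exists_precK_ofGale {P Q : GaleC a k × GaleC b k} (h : P < Q) :
    ∃ P', PrecK (ofGale P) (ofGale P') ∧ P < P' ∧ P' ≤ Q := by
  have step {P' : GaleC a k × GaleC b k} (j : Fin k)
      (heq : ∀ l ≠ j, points P l = points P' l) (hlt : points P j < points P' j) :
      PrecK (ofGale P) (ofGale P') :=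
    precK_of_eqOn (injective_points P) (injective_points P') j heq hlt
      (range_points P) (range_points P')
  rcases Prod.lt_iff.mp h with ⟨hX, hY⟩ | ⟨hX, hY⟩
  · obtain ⟨i, X', hXX', hX'Q, hlt, heq⟩ := GaleC.exists_bump hX
    refine ⟨(X', P.2), step i (fun l hl => ?_) ?_, Prod.lt_iff.mpr (.inl ⟨hXX', le_rfl⟩),
      hX'Q, hY⟩
    · exact Subtype.ext (Prod.ext (heq l hl).symm rfl)
    · exact lt_of_le_of_ne ⟨hlt.le, le_rfl⟩ fun h => hlt.ne (congrArg (·.1.1) h)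
  · obtain ⟨i, Y', hYY', hY'Q, hlt, heq⟩ := GaleC.exists_bump hY
    refine ⟨(P.1, Y'), step i.rev (fun l hl => ?_) ?_, Prod.lt_iff.mpr (.inr ⟨le_rfl, hYY'⟩),
      hX, hY'Q⟩
    · exact Subtype.ext (Prod.ext rfl (heq l.rev (Fin.rev_eq_iff.not.mpr hl)).symm)
    · have hlt' : P.2.1 i.rev.rev < Y'.1 i.rev.rev := by rwa [Fin.rev_rev]
      exact lt_of_le_of_ne ⟨le_rfl, hlt'.le⟩ fun h => hlt'.ne (congrArg (·.1.2) h)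

theorem le_of_toGale_le {A B : AkSet (Box a b) k} (h : toGale A ≤ toGale B) : A ≤ B := by
  have : Relation.ReflTransGen PrecK (ofGale (toGale A)) (ofGale (toGale B)) :=
    (reflTransGen_of_le_of_exists_step (r := fun P Q => PrecK (ofGale P) (ofGale Q))
      (fun _ _ => exists_precK_ofGale) h).lift ofGale fun _ _ h => h
  rwa [ofGale_toGale, ofGale_toGale] at this

noncomputable def galeOrderIso (a b k : ℕ) : AkSet (Box a b) k ≃o GaleC a k × GaleC b k where
  toEquiv := galeEquiv
  map_rel_iff' := ⟨le_of_toGale_le, toGale_mono⟩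

end Box

theorem stmt14_general (a b k : ℕ) :
    ∃ e : AkSet (Box a b) k ≃o GaleC a k × GaleC b k,
      ∀ (A : AkSet (Box a b) k) (f : Fin k → Box a b),
        (StrictMono fun i => (f i).val.1) →
        Set.range f = (A.carrier : Set (Box a b)) →
        ∀ i : Fin k,
          (e A).1.val i = (f i).val.1 ∧ (e A).2.val i = (f i.rev).val.2 := by
  refine ⟨Box.galeOrderIso a b k, fun A f hf hA i => ?_⟩
  obtain rfl := Box.eq_enum hf hA
  exact ⟨rfl, rfl⟩

/-- For `k ≤ min(a,b)`, the poset `(A_k([a] × [b]), ≤_k)` is isomorphic to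
`C(a,k) × C(b,k)`; explicitly, the antichain `{(x₁,y₁),…,(x_k,y_k)}` with
`x₁ < ⋯ < x_k` and `y₁ > ⋯ > y_k` is sent to `((x₁,…,x_k), (y_k,…,y_1))`. -/
theorem stmt14 (a b k : ℕ) (hk : k ≤ min a b) :
    ∃ e : AkSet (Box a b) k ≃o GaleC a k × GaleC b k,
      ∀ (A : AkSet (Box a b) k) (f : Fin k → Box a b),
        (StrictMono fun i => (f i).val.1) →
        Set.range f = (A.carrier : Set (Box a b)) →
        ∀ i : Fin k,
          (e A).1.val i = (f i).val.1 ∧ (e A).2.val i = (f i.rev).val.2 :=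
  stmt14_general a b k
end

section
/- Let n, k be nonnegative integers with k ≤ ⌊(n+2)/2⌋. Then there are isomorphisms of posets A_k(J([n] × [2])) ≅ A_k(C(n+2, 2)) ≅ C(n+2, 2k), where A_k carries the order ≤_k. Explicitly, the map sending an antichain {(x_1,y_1),…,(x_k,y_k)} of C(n+2,2) with x_1 < ⋯ < x_k (and hence y_1 > ⋯ > y_k and x_k < y_k) to the increasing sequence (x_1,…,x_k,y_k,…,y_1) is a poset isomorphism A_k(C(n+2,2)) → C(n+2,2k). -/
/-!
An order ideal of `[n] × [2]` is determined by its row lengths `b ≤ a ≤ n`, i.e. by the element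
`(b + 1, a + 2)` of `C(n + 2, 2)`, and an order isomorphism transports `≤_k`.

Listed by increasing first coordinate, a `k`-antichain `{(x_i, y_i)}` of `C(m, 2)` has decreasing
second coordinates and `x_i < y_j` for all `i, j`, so `(x₀, …, x_{k-1}, y_{k-1}, …, y₀)` is an
increasing sequence, and every element of `C(m, 2k)` arises this way from exactly one antichain.
A step `A ≺_k B` replaces a pair by a larger one at the same place in the list, hence raises the
sequence componentwise. Conversely, a componentwise increase of sequences is a chain of increases
of single coordinates, each of which replaces exactly one pair by a larger one.
-/

namespace AkSet

variable {P Q : Type*} [PartialOrder P] [PartialOrder Q] {k : ℕ}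

lemma isAntichain (A : AkSet P k) : IsAntichain (· ≤ ·) (A.carrier : Set P) := A.2.1

lemma card_carrier (A : AkSet P k) : A.carrier.card = k := A.2.2

lemma precK_iff {A B : AkSet P k} :
    PrecK A B ↔ ∃ a b, a ∈ (A.carrier : Set P) ∧ b ∉ (A.carrier : Set P) ∧ a < b ∧
      (B.carrier : Set P) = insert b ((A.carrier : Set P) \ {a}) := by
  constructor
  · rintro ⟨a, b, hA, hB, hab⟩
    have ha : a ∈ (A.carrier : Set P) \ B.carrier := hA ▸ rfl
    have hb : b ∈ (B.carrier : Set P) \ A.carrier := hB ▸ rfl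
    refine ⟨a, b, ha.1, hb.2, hab, Set.ext fun x => ?_⟩
    have hAx := Set.ext_iff.1 hA x
    have hBx := Set.ext_iff.1 hB x
    simp only [Set.mem_sdiff, Set.mem_singleton_iff, Set.mem_insert_iff, Finset.mem_coe] at *
    by_cases hx : x ∈ A.carrier <;> tauto
  · rintro ⟨a, b, ha, hb, hab, hB⟩
    refine ⟨a, b, ?_, ?_, hab⟩ <;> rw [hB] <;> ext x <;>
      simp only [Set.mem_sdiff, Set.mem_singleton_iff, Set.mem_insert_iff, Finset.mem_coe]
    · constructor
      · tauto
      · rintro rfl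
        exact ⟨ha, by rintro (rfl | h) <;> tauto⟩
    · constructor
      · tauto
      · rintro rfl
        exact ⟨Or.inl rfl, hb⟩

def map (e : P ≃o Q) (A : AkSet P k) : AkSet Q k :=
  ⟨A.carrier.map e.toEquiv.toEmbedding, by
    simpa using A.isAntichain.image_relIso e, by simpa using A.card_carrier⟩

lemma coe_carrier_map (e : P ≃o Q) (A : AkSet P k) :
    ((map e A).carrier : Set Q) = e '' A.carrier := by
  simp [map, AkSet.carrier]

lemma map_symm_map (e : P ≃o Q) (A : AkSet P k) : map e.symm (map e A) = A := by
  apply Subtype.ext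
  ext x
  simp [map, AkSet.carrier]

lemma precK_map (e : P ≃o Q) {A B : AkSet P k} (h : PrecK A B) : PrecK (map e A) (map e B) := by
  obtain ⟨a, b, hA, hB, hab⟩ := h
  refine ⟨e a, e b, ?_, ?_, e.strictMono hab⟩
  · rw [coe_carrier_map, coe_carrier_map, ← Set.image_sdiff e.injective, hA, Set.image_singleton]
  · rw [coe_carrier_map, coe_carrier_map, ← Set.image_sdiff e.injective, hB, Set.image_singleton]

def congr (e : P ≃o Q) : AkSet P k ≃o AkSet Q k where
  toFun := map e
  invFun := map e.symm
  left_inv := map_symm_map e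
  right_inv A := by simpa using map_symm_map e.symm A
  map_rel_iff' {A B} := by
    refine ⟨fun h => ?_, fun h => h.lift (map e) fun _ _ => precK_map e⟩
    have h' : LeK (map e.symm (map e A)) (map e.symm (map e B)) :=
      Relation.ReflTransGen.lift (map e.symm) (fun _ _ => precK_map e.symm) _ _ h
    rwa [map_symm_map, map_symm_map] at h'

end AkSet

lemma StrictMono.update {ι α : Type*} [LinearOrder ι] [DecidableEq ι] [Preorder α] {f : ι → α}
    (hf : StrictMono f) {i : ι} {b : α} (hlt : ∀ j < i, f j < b) (hgt : ∀ j, i < j → b < f j) :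
    StrictMono (Function.update f i b) := by
  intro a c hac
  rcases eq_or_ne a i with ha | ha <;> rcases eq_or_ne c i with hc | hc
  · exact absurd (ha.trans hc.symm) hac.ne
  · simpa [ha, hc] using hgt c (ha ▸ hac)
  · simpa [ha, hc] using hlt a (hc ▸ hac)
  · simpa [ha, hc] using hf hac

lemma Set.range_update_of_injective {ι α : Type*} [DecidableEq ι] {f : ι → α}
    (hf : Function.Injective f) (i : ι) (b : α) :
    Set.range (Function.update f i b) = insert b (Set.range f \ {f i}) := by
  ext x
  simp only [Set.mem_range, Set.mem_insert_iff, Set.mem_sdiff, Set.mem_singleton_iff]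
  constructor
  · rintro ⟨j, rfl⟩
    rcases eq_or_ne j i with rfl | hj
    · simp
    · exact Or.inr ⟨⟨j, by simp [hj]⟩, by simpa [hj] using hf.ne hj⟩
  · rintro (rfl | ⟨⟨j, rfl⟩, hj⟩)
    · exact ⟨i, by simp⟩
    · exact ⟨j, by simp [show j ≠ i by rintro rfl; exact hj rfl]⟩

namespace GaleC

variable {m k : ℕ}

lemma le_iff_forall {x y : GaleC m k} : x ≤ y ↔ ∀ i, x.val i ≤ y.val i := Iff.rfl

lemma le_iff₂ {p q : GaleC m 2} : p ≤ q ↔ p.val 0 ≤ q.val 0 ∧ p.val 1 ≤ q.val 1 := by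
  rw [le_iff_forall, Fin.forall_fin_two]

lemma val_zero_lt_val_one (p : GaleC m 2) : p.val 0 < p.val 1 := p.2.1 Fin.zero_lt_one

lemma ext₂ {p q : GaleC m 2} (h₀ : p.val 0 = q.val 0) (h₁ : p.val 1 = q.val 1) : p = q :=
  le_antisymm (le_iff₂.2 ⟨h₀.le, h₁.le⟩) (le_iff₂.2 ⟨h₀.ge, h₁.ge⟩)

def mk₂ (a b : ℕ) (ha : 1 ≤ a) (hab : a < b) (hb : b ≤ m) : GaleC m 2 :=
  ⟨![a, b], Fin.strictMono_iff_lt_succ.2 fun i => by fin_cases i; simpa,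
    fun i => by fin_cases i <;> simp <;> omega⟩

@[simp] lemma mk₂_val_zero {a b : ℕ} (ha hab hb) : (mk₂ (m := m) a b ha hab hb).val 0 = a := rfl

@[simp] lemma mk₂_val_one {a b : ℕ} (ha hab hb) : (mk₂ (m := m) a b ha hab hb).val 1 = b := rfl

/-- The positions of `x_i` and `y_i` in the sequence `(x₀, …, x_{k-1}, y_{k-1}, …, y₀)`. -/
def fstPos (i : Fin k) : Fin (2 * k) := ⟨i, by omega⟩

def sndPos (i : Fin k) : Fin (2 * k) := ⟨2 * k - 1 - i, by omega⟩

lemma fstPos_injective : Function.Injective (fstPos (k := k)) := fun _ _ h =>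
  Fin.ext (by simpa [fstPos] using h)

lemma sndPos_injective : Function.Injective (sndPos (k := k)) := fun _ _ h => by
  have := congrArg Fin.val h
  simp only [sndPos] at this
  omega

lemma fstPos_lt_sndPos (i j : Fin k) : fstPos i < sndPos j := by
  simp only [Fin.lt_def, fstPos, sndPos]
  omega

lemma exists_eq_fstPos_or_sndPos (j : Fin (2 * k)) : ∃ i, j = fstPos i ∨ j = sndPos i := by
  by_cases h : (j : ℕ) < k
  · exact ⟨⟨j, h⟩, Or.inl rfl⟩
  · exact ⟨⟨2 * k - 1 - j, by omega⟩, Or.inr (Fin.ext (by simp only [sndPos]; omega))⟩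

lemma forall_fin_two_mul {p : Fin (2 * k) → Prop} :
    (∀ j, p j) ↔ (∀ i, p (fstPos i)) ∧ ∀ i, p (sndPos i) := by
  refine ⟨fun h => ⟨fun i => h _, fun i => h _⟩, fun ⟨h₁, h₂⟩ j => ?_⟩
  obtain ⟨i, rfl | rfl⟩ := exists_eq_fstPos_or_sndPos j
  exacts [h₁ i, h₂ i]

def pair (z : GaleC m (2 * k)) (i : Fin k) : GaleC m 2 :=
  mk₂ (z.val (fstPos i)) (z.val (sndPos i)) (z.2.2 _).1 (z.2.1 (fstPos_lt_sndPos i i)) (z.2.2 _).2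

@[simp] lemma pair_val_zero (z : GaleC m (2 * k)) (i : Fin k) :
    (pair z i).val 0 = z.val (fstPos i) := rfl

@[simp] lemma pair_val_one (z : GaleC m (2 * k)) (i : Fin k) :
    (pair z i).val 1 = z.val (sndPos i) := rfl

lemma strictMono_pair_val_zero (z : GaleC m (2 * k)) :
    StrictMono fun i => (pair z i).val 0 := fun i j (h : fstPos i < fstPos j) => z.2.1 h

lemma strictAnti_pair_val_one (z : GaleC m (2 * k)) :
    StrictAnti fun i => (pair z i).val 1 := fun i j h =>
  z.2.1 (show sndPos j < sndPos i by simp only [Fin.lt_def, sndPos]; omega)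

lemma pair_injective (z : GaleC m (2 * k)) : Function.Injective (pair z) := fun _ _ h =>
  (strictMono_pair_val_zero z).injective (congrArg (fun p : GaleC m 2 => p.val 0) h)

lemma pair_le_pair_iff {z w : GaleC m (2 * k)} : (∀ i, pair z i ≤ pair w i) ↔ z ≤ w := by
  rw [le_iff_forall, forall_fin_two_mul]
  simp only [le_iff₂, pair_val_zero, pair_val_one, forall_and]

lemma eq_of_pair_eq {z w : GaleC m (2 * k)} (h : pair z = pair w) : z = w :=
  le_antisymm (pair_le_pair_iff.1 fun i => (congrFun h i).le)
    (pair_le_pair_iff.1 fun i => (congrFun h i).ge)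

section Staircase

variable {ι : Type*} [LinearOrder ι] {f g : ι → GaleC m 2}

lemma isAntichain_range_iff (h₀ : StrictMono fun i => (f i).val 0) :
    IsAntichain (· ≤ ·) (Set.range f) ↔ StrictAnti fun i => (f i).val 1 := by
  constructor
  · intro hf i j hij
    by_contra hle
    have := hf.eq (Set.mem_range_self i) (Set.mem_range_self j)
      (le_iff₂.2 ⟨(h₀ hij).le, not_lt.1 hle⟩)
    exact (h₀ hij).ne (congrArg (fun p : GaleC m 2 => p.val 0) this)
  · rintro h₁ _ ⟨i, rfl⟩ _ ⟨j, rfl⟩ hne hle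
    rcases lt_trichotomy i j with hij | rfl | hij
    · exact (h₁ hij).not_ge (le_iff₂.1 hle).2
    · exact hne rfl
    · exact (h₀ hij).not_ge (le_iff₂.1 hle).1

lemma val_zero_lt_val_one_of_strictAnti (h₀ : StrictMono fun i => (f i).val 0)
    (h₁ : StrictAnti fun i => (f i).val 1) (i j : ι) : (f i).val 0 < (f j).val 1 := by
  rcases le_or_gt i j with h | h
  · exact (h₀.monotone h).trans_lt (f j).val_zero_lt_val_one
  · exact (f i).val_zero_lt_val_one.trans (h₁ h)

lemma eq_of_range_eq [WellFoundedLT ι] (hf : StrictMono fun i => (f i).val 0)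
    (hg : StrictMono fun i => (g i).val 0) (h : Set.range f = Set.range g) : f = g := by
  have h₀ : (fun i => (f i).val 0) = fun i => (g i).val 0 := by
    refine (hf.range_inj hg).1 ?_
    have := congrArg (Set.image fun p : GaleC m 2 => p.val 0) h
    rwa [← Set.range_comp', ← Set.range_comp'] at this
  funext i
  obtain ⟨j, hj⟩ : f i ∈ Set.range g := h ▸ Set.mem_range_self i
  have hji : j = i := hg.injective (show (g j).val 0 = (g i).val 0 by rw [hj]; exact congrFun h₀ i)
  rw [← hj, hji]

end Staircase

def unpair (f : Fin k → GaleC m 2) (h₀ : StrictMono fun i => (f i).val 0)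
    (h₁ : StrictAnti fun i => (f i).val 1) : GaleC m (2 * k) :=
  ⟨fun j => if h : (j : ℕ) < k then (f ⟨j, h⟩).val 0 else (f ⟨2 * k - 1 - j, by omega⟩).val 1,
    fun a b (hab : (a : ℕ) < b) => by
      dsimp only
      split_ifs with ha hb hb
      · exact h₀ (Fin.mk_lt_mk.2 hab)
      · exact val_zero_lt_val_one_of_strictAnti h₀ h₁ _ _
      · omega
      · exact h₁ (Fin.mk_lt_mk.2 (by omega)),
    fun j => by dsimp only; split_ifs <;> exact (f _).2.2 _⟩

lemma pair_unpair (f : Fin k → GaleC m 2) (h₀ : StrictMono fun i => (f i).val 0)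
    (h₁ : StrictAnti fun i => (f i).val 1) : pair (unpair f h₀ h₁) = f := by
  funext i
  refine ext₂ (dif_pos i.2) ?_
  refine (dif_neg (show ¬ 2 * k - 1 - (i : ℕ) < k by omega)).trans ?_
  exact congrArg (fun t => (f t).val 1) (Fin.ext (by simp only [sndPos]; omega))

def toAntichain (z : GaleC m (2 * k)) : AkSet (GaleC m 2) k :=
  ⟨Finset.univ.image (pair z), by
    simpa using (isAntichain_range_iff (strictMono_pair_val_zero z)).2 (strictAnti_pair_val_one z),
    by rw [Finset.card_image_of_injective _ (pair_injective z), Finset.card_univ, Fintype.card_fin]⟩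

lemma coe_carrier_toAntichain (z : GaleC m (2 * k)) :
    ((toAntichain z).carrier : Set (GaleC m 2)) = Set.range (pair z) := by
  simp [toAntichain, AkSet.carrier]

lemma val_zero_injOn (A : AkSet (GaleC m 2) k) :
    Set.InjOn (fun p : GaleC m 2 => p.val 0) A.carrier := by
  intro p hp q hq (h : p.val 0 = q.val 0)
  rcases le_total (p.val 1) (q.val 1) with h₁ | h₁
  · exact A.isAntichain.eq hp hq (le_iff₂.2 ⟨h.le, h₁⟩)
  · exact (A.isAntichain.eq hq hp (le_iff₂.2 ⟨h.ge, h₁⟩)).symm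

lemma exists_enum (A : AkSet (GaleC m 2) k) :
    ∃ f : Fin k → GaleC m 2, (StrictMono fun i => (f i).val 0) ∧
      Set.range f = A.carrier := by
  set S := A.carrier.image fun p : GaleC m 2 => p.val 0
  have hS : S.card = k := (Finset.card_image_of_injOn (val_zero_injOn A)).trans A.card_carrier
  have hmem : ∀ i, ∃ p ∈ A.carrier, p.val 0 = S.orderEmbOfFin hS i := fun i =>
    Finset.mem_image.1 (S.orderEmbOfFin_mem hS i)
  choose f hfA hf₀ using hmem
  refine ⟨f, by simpa only [hf₀] using (S.orderEmbOfFin hS).strictMono, ?_⟩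
  refine subset_antisymm (Set.range_subset_iff.2 hfA) fun p hp => ?_
  obtain ⟨i, hi⟩ : p.val 0 ∈ Set.range (S.orderEmbOfFin hS) := by
    rw [Finset.range_orderEmbOfFin]
    exact Finset.mem_image_of_mem _ hp
  exact ⟨i, val_zero_injOn A (hfA i) hp ((hf₀ i).trans hi)⟩

lemma toAntichain_unpair {A : AkSet (GaleC m 2) k} {f : Fin k → GaleC m 2}
    (h₀ : StrictMono fun i => (f i).val 0) (h₁ : StrictAnti fun i => (f i).val 1)
    (hf : Set.range f = A.carrier) : toAntichain (unpair f h₀ h₁) = A := by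
  apply Subtype.ext
  apply Finset.coe_injective
  change (↑(toAntichain (unpair f h₀ h₁)).carrier : Set (GaleC m 2)) = ↑A.carrier
  rw [coe_carrier_toAntichain, pair_unpair, hf]

lemma toAntichain_injective : Function.Injective (toAntichain (m := m) (k := k)) := by
  intro z w h
  refine eq_of_pair_eq (eq_of_range_eq (strictMono_pair_val_zero z) (strictMono_pair_val_zero w) ?_)
  rw [← coe_carrier_toAntichain, ← coe_carrier_toAntichain, h]

lemma toAntichain_surjective : Function.Surjective (toAntichain (m := m) (k := k)) := by
  intro A
  obtain ⟨f, h₀, hf⟩ := exists_enum A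
  have h₁ := (isAntichain_range_iff h₀).1 (hf ▸ A.isAntichain)
  exact ⟨unpair f h₀ h₁, toAntichain_unpair h₀ h₁ hf⟩

/-- If `A ≺_k B`, the pair leaving `A` and the pair entering `B` occupy the same position when both
antichains are listed by first coordinate: a later pair of `A` below the new one would be comparable
to it. -/
lemma le_of_precK_toAntichain {z w : GaleC m (2 * k)}
    (h : PrecK (toAntichain z) (toAntichain w)) : z ≤ w := by
  obtain ⟨a, b, ⟨i, rfl⟩, hb, hab, hB⟩ := by
    simpa only [coe_carrier_toAntichain] using AkSet.precK_iff.1 h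
  rw [← Set.range_update_of_injective (pair_injective z)] at hB
  have hBw : IsAntichain (· ≤ ·) (Set.range (pair w)) :=
    (isAntichain_range_iff (strictMono_pair_val_zero w)).2 (strictAnti_pair_val_one w)
  have hgt : ∀ j, i < j → b.val 0 < (pair z j).val 0 := fun j hij => by
    by_contra hle
    have hle' : pair z j ≤ b :=
      le_iff₂.2 ⟨not_lt.1 hle, ((strictAnti_pair_val_one z hij).trans_le (le_iff₂.1 hab.le).2).le⟩
    have hzj : pair z j ∈ Set.range (pair w) :=
      hB ▸ ⟨j, Function.update_of_ne (ne_of_gt hij) _ _⟩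
    have hb' : b ∈ Set.range (pair w) := hB ▸ ⟨i, Function.update_self _ _ _⟩
    exact hb ⟨j, hBw.eq hzj hb' hle'⟩
  have hmono : StrictMono fun j => (Function.update (pair z) i b j).val 0 := by
    simp only [Function.apply_update (fun _ (p : GaleC m 2) => p.val 0)]
    exact (strictMono_pair_val_zero z).update
      (fun j hji => (strictMono_pair_val_zero z hji).trans_le (le_iff₂.1 hab.le).1) hgt
  have hw := eq_of_range_eq hmono (strictMono_pair_val_zero w) hB.symm
  refine pair_le_pair_iff.1 fun j => hw ▸ ?_
  rcases eq_or_ne j i with rfl | hj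
  · simpa using hab.le
  · simp [hj]

lemma precK_toAntichain {z w : GaleC m (2 * k)} (hzw : z < w) {i₀ : Fin k}
    (h : ∀ i ≠ i₀, pair z i = pair w i) : PrecK (toAntichain z) (toAntichain w) := by
  have hw : pair w = Function.update (pair z) i₀ (pair w i₀) := by
    funext i
    rcases eq_or_ne i i₀ with rfl | hi
    · simp
    · simp [hi, h i hi]
  have hlt : pair z i₀ < pair w i₀ := by
    refine lt_of_le_of_ne (pair_le_pair_iff.2 hzw.le i₀) fun he => hzw.ne (eq_of_pair_eq ?_)
    rw [hw, ← he, Function.update_eq_self]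
  refine AkSet.precK_iff.2 ⟨pair z i₀, pair w i₀, ?_, ?_, hlt, ?_⟩ <;>
    simp only [coe_carrier_toAntichain]
  · exact Set.mem_range_self i₀
  · rintro ⟨j, hj⟩
    rcases eq_or_ne j i₀ with rfl | hji
    · exact hlt.ne hj
    · exact hji (pair_injective w ((h j hji).symm.trans hj))
  · conv_lhs => rw [hw]
    exact Set.range_update_of_injective (pair_injective z) _ _

lemma exists_forall_ne_pair_eq {z w : GaleC m (2 * k)} {j₀ : Fin (2 * k)}
    (h : ∀ j ≠ j₀, z.val j = w.val j) : ∃ i₀, ∀ i ≠ i₀, pair z i = pair w i := by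
  obtain ⟨i₀, hj₀⟩ := exists_eq_fstPos_or_sndPos j₀
  refine ⟨i₀, fun i hi => ext₂ (h _ ?_) (h _ ?_)⟩ <;> rcases hj₀ with rfl | rfl
  · exact fstPos_injective.ne hi
  · exact (fstPos_lt_sndPos i i₀).ne
  · exact (fstPos_lt_sndPos i₀ i).ne'
  · exact sndPos_injective.ne hi

/-- Raising the last coordinate in which `z` and `w` differ keeps the sequence increasing and moves
a single pair of the antichain. -/
lemma exists_precK_toAntichain_of_lt {z w : GaleC m (2 * k)} (h : z < w) :
    ∃ z', z < z' ∧ z' ≤ w ∧ PrecK (toAntichain z) (toAntichain z') := by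
  set D := Finset.univ.filter fun j => z.val j < w.val j
  obtain ⟨j₀, hj₀D, hj₀max⟩ := D.exists_max_image id <| by
    obtain ⟨j, hj⟩ := (Pi.lt_def.1 h).2
    exact ⟨j, Finset.mem_filter.2 ⟨Finset.mem_univ j, hj⟩⟩
  have hj₀ : z.val j₀ < w.val j₀ := (Finset.mem_filter.1 hj₀D).2
  have hright : ∀ j, j₀ < j → z.val j = w.val j := fun j hj =>
    (h.le j).eq_of_not_lt fun hlt =>
      hj.not_ge (hj₀max j (Finset.mem_filter.2 ⟨Finset.mem_univ j, hlt⟩))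
  have hmono : StrictMono (Function.update z.val j₀ (w.val j₀)) :=
    z.2.1.update (fun j hj => (z.2.1 hj).trans hj₀) fun j hj => (hright j hj) ▸ w.2.1 hj
  have hbound : ∀ j, 1 ≤ Function.update z.val j₀ (w.val j₀) j ∧
      Function.update z.val j₀ (w.val j₀) j ≤ m := fun j => by
    rcases eq_or_ne j j₀ with rfl | hj
    · simpa using w.2.2 j
    · simpa [hj] using z.2.2 j
  let z' : GaleC m (2 * k) := ⟨_, hmono, hbound⟩
  have hzz' : z < z' := Pi.lt_def.2 ⟨fun j => by
    rcases eq_or_ne j j₀ with rfl | hj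
    · simpa [z'] using hj₀.le
    · simp [z', hj], j₀, by simpa [z'] using hj₀⟩
  have hz'w : z' ≤ w := fun j => by
    rcases eq_or_ne j j₀ with rfl | hj
    · simp [z']
    · simpa [z', hj] using h.le j
  obtain ⟨i₀, hi₀⟩ := exists_forall_ne_pair_eq (z := z) (w := z') (j₀ := j₀)
    fun j hj => by simp [z', hj]
  exact ⟨z', hzz', hz'w, precK_toAntichain hzz' hi₀⟩

lemma leK_toAntichain_of_le {z w : GaleC m (2 * k)} (h : z ≤ w) :
    LeK (toAntichain z) (toAntichain w) := by
  induction hd : ∑ j, (w.val j - z.val j) using Nat.strong_induction_on generalizing z with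
  | _ d ih =>
    rcases h.eq_or_lt with rfl | hlt
    · exact .refl
    obtain ⟨z', hzz', hz'w, hstep⟩ := exists_precK_toAntichain_of_lt hlt
    refine .head hstep (ih _ (hd ▸ ?_) hz'w rfl)
    obtain ⟨j, hj⟩ := (Pi.lt_def.1 hzz').2
    exact Finset.sum_lt_sum (fun i _ => Nat.sub_le_sub_left (hzz'.le i) _)
      ⟨j, Finset.mem_univ j, Nat.sub_lt_sub_left ((hj.trans_le (hz'w j))) hj⟩

lemma le_of_leK_toAntichain {z w : GaleC m (2 * k)} (h : LeK (toAntichain z) (toAntichain w)) :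
    z ≤ w := by
  obtain ⟨g, hg⟩ := (toAntichain_surjective (m := m) (k := k)).hasRightInverse
  have hgz : ∀ z, g (toAntichain z) = z := fun z => toAntichain_injective (hg _)
  have := h.lift g fun A B hAB => le_of_precK_toAntichain (by rwa [hg, hg])
  rw [Relation.reflTransGen_eq_self] at this
  simpa only [Function.onFun, hgz] using this

lemma toAntichain_le_toAntichain_iff {z w : GaleC m (2 * k)} :
    toAntichain z ≤ toAntichain w ↔ z ≤ w :=
  ⟨le_of_leK_toAntichain, leK_toAntichain_of_le⟩

noncomputable def galeIso : AkSet (GaleC m 2) k ≃o GaleC m (2 * k) :=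
  OrderIso.symm
    { Equiv.ofBijective toAntichain ⟨toAntichain_injective, toAntichain_surjective⟩ with
      map_rel_iff' := toAntichain_le_toAntichain_iff }

lemma galeIso_apply {A : AkSet (GaleC m 2) k} {f : Fin k → GaleC m 2}
    (h₀ : StrictMono fun i => (f i).val 0) (hf : Set.range f = A.carrier) :
    galeIso A = unpair f h₀ ((isAntichain_range_iff h₀).1 (hf ▸ A.isAntichain)) :=
  (OrderIso.symm_apply_eq _).2 (toAntichain_unpair _ _ hf).symm

end GaleC

namespace Box

variable {n : ℕ}

lemma le_iff {p q : Box n 2} : p ≤ q ↔ p.val.1 ≤ q.val.1 ∧ p.val.2 ≤ q.val.2 := Iff.rfl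

/-- `x = (x₀, x₁)` gives the ideal whose rows `2` and `1` have lengths `x₀ - 1 ≤ x₁ - 2`. -/
def toLower (x : GaleC (n + 2) 2) : LowerSet (Box n 2) where
  carrier := {p | (p.val.2 = 1 → p.val.1 + 2 ≤ x.val 1) ∧ (p.val.2 = 2 → p.val.1 + 1 ≤ x.val 0)}
  lower' p q hqp hp := by
    have := x.val_zero_lt_val_one
    have := le_iff.1 hqp
    have := q.2
    simp only [Set.mem_ofPred_eq] at hp ⊢
    omega

lemma mem_toLower {x : GaleC (n + 2) 2} {p : Box n 2} :
    p ∈ toLower x ↔ (p.val.2 = 1 → p.val.1 + 2 ≤ x.val 1) ∧ (p.val.2 = 2 → p.val.1 + 1 ≤ x.val 0) :=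
  Iff.rfl

lemma mk_mem_toLower {x : GaleC (n + 2) 2} {i r : ℕ} {h} :
    (⟨(i, r), h⟩ : Box n 2) ∈ toLower x ↔ (r = 1 → i + 2 ≤ x.val 1) ∧ (r = 2 → i + 1 ≤ x.val 0) :=
  Iff.rfl

lemma toLower_le_toLower_iff {x y : GaleC (n + 2) 2} : toLower x ≤ toLower y ↔ x ≤ y := by
  have hx := x.val_zero_lt_val_one
  have hy := y.val_zero_lt_val_one
  have hx₁ := (x.2.2 1).2
  have hy₀ := (y.2.2 0).1
  refine ⟨fun h => GaleC.le_iff₂.2 ⟨?_, ?_⟩, fun h p (hp : p ∈ toLower x) => ?_⟩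
  · by_contra! hlt
    have := mk_mem_toLower.1 (@h ⟨(x.val 0 - 1, 2), by omega⟩ (mk_mem_toLower.2 (by omega)))
    omega
  · by_contra! hlt
    have := mk_mem_toLower.1 (@h ⟨(x.val 1 - 2, 1), by omega⟩ (mk_mem_toLower.2 (by omega)))
    omega
  · have := GaleC.le_iff₂.1 h
    show p ∈ toLower y
    rw [mem_toLower] at hp ⊢
    omega

-- An empty row has length `sSup ∅ = 0`.
noncomputable def rowLength (L : LowerSet (Box n 2)) (r : ℕ) : ℕ :=
  sSup {i | ∃ p ∈ L, p.val = (i, r)}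

lemma rowLength_le (L : LowerSet (Box n 2)) (r : ℕ) : rowLength L r ≤ n :=
  csSup_le' fun _ ⟨p, _, hp⟩ => (congrArg Prod.fst hp).symm.trans_le p.2.1.2

lemma mem_iff_le_rowLength {L : LowerSet (Box n 2)} {p : Box n 2} :
    p ∈ L ↔ p.val.1 ≤ rowLength L p.val.2 := by
  have hbdd : BddAbove {i | ∃ q ∈ L, q.val = (i, p.val.2)} :=
    ⟨n, fun _ ⟨q, _, hq⟩ => (congrArg Prod.fst hq).symm.trans_le q.2.1.2⟩
  refine ⟨fun hp => le_csSup hbdd ⟨p, hp, rfl⟩, fun hle => ?_⟩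
  have hne : {i | ∃ q ∈ L, q.val = (i, p.val.2)}.Nonempty := by
    by_contra hemp
    rw [Set.not_nonempty_iff_eq_empty] at hemp
    have := p.2.1.1
    simp only [rowLength, hemp, csSup_empty, bot_eq_zero'] at hle
    omega
  obtain ⟨q, hq, hqp⟩ := Nat.sSup_mem hne hbdd
  exact L.lower (le_iff.2 ⟨(Prod.ext_iff.1 hqp).1 ▸ hle, (Prod.ext_iff.1 hqp).2.ge⟩) hq

lemma rowLength_two_le_one (L : LowerSet (Box n 2)) : rowLength L 2 ≤ rowLength L 1 := by
  by_cases h : rowLength L 2 = 0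
  · omega
  have := rowLength_le L 2
  have h₂ : (⟨(rowLength L 2, 2), by omega⟩ : Box n 2) ∈ L := mem_iff_le_rowLength.2 le_rfl
  have hle : (⟨(rowLength L 2, 1), by omega⟩ : Box n 2) ≤ ⟨(rowLength L 2, 2), by omega⟩ :=
    le_iff.2 ⟨le_rfl, by norm_num⟩
  exact mem_iff_le_rowLength.1 (L.lower hle h₂)

lemma toLower_surjective : Function.Surjective (toLower (n := n)) := by
  intro L
  have h₁ := rowLength_le L 1
  have h₂₁ := rowLength_two_le_one L
  refine ⟨GaleC.mk₂ (rowLength L 2 + 1) (rowLength L 1 + 2) (by omega) (by omega) (by omega), ?_⟩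
  refine SetLike.ext fun ⟨⟨i, r⟩, hi, hr⟩ => ?_
  rw [mem_toLower, mem_iff_le_rowLength]
  obtain rfl | rfl : r = 1 ∨ r = 2 := by omega
  all_goals simp

noncomputable def lowerSetIso : GaleC (n + 2) 2 ≃o LowerSet (Box n 2) :=
  OrderIso.ofSurjective (OrderEmbedding.ofMapLEIff toLower fun _ _ => toLower_le_toLower_iff)
    toLower_surjective

end Box

/-- For `k ≤ ⌊(n+2)/2⌋` there are poset isomorphisms
`A_k(J([n] × [2])) ≅ A_k(C(n+2,2)) ≅ C(n+2, 2k)` (where `J([n] × [2])` is the poset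
of order ideals, i.e. lower sets, of `[n] × [2]`).  Explicitly, the second
isomorphism sends the antichain `{(x₁,y₁),…,(x_k,y_k)}` of `C(n+2,2)` with
`x₁ < ⋯ < x_k` (hence `y₁ > ⋯ > y_k` and `x_k < y_k`) to the increasing sequence
`(x₁,…,x_k,y_k,…,y_1)`. -/
theorem stmt16 (n k : ℕ) :
    Nonempty (AkSet (LowerSet (Box n 2)) k ≃o AkSet (GaleC (n + 2) 2) k) ∧
    ∃ e : AkSet (GaleC (n + 2) 2) k ≃o GaleC (n + 2) (2 * k),
      ∀ (A : AkSet (GaleC (n + 2) 2) k) (f : Fin k → GaleC (n + 2) 2),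
        (StrictMono fun i => (f i).val 0) →
        Set.range f = (A.carrier : Set (GaleC (n + 2) 2)) →
        ∀ j : Fin (2 * k),
          (e A).val j =
            if h : (j : ℕ) < k then (f ⟨j, h⟩).val 0
            else (f ⟨2 * k - 1 - j, by have := j.isLt; omega⟩).val 1 :=
  ⟨⟨AkSet.congr Box.lowerSetIso.symm⟩, GaleC.galeIso, fun _ _ h₀ hf j => by
    rw [GaleC.galeIso_apply h₀ hf]
    rfl⟩
end
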